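/- arXiv:2207.13469 — 4 statements merged into one kernel-verified Lean document; each statement's English description precedes it below -/
import Mathlib

section
/- Suppose for each i = 1,...,L the distribution of outcomes of (A_i, B_i) on a separable bipartite state arises as a common convex combination ∑_j λ_j (a^{(j)}_i ⊗ b^{(j)}_i) of product distributions (same weights λ_j for all i). If the single-system distributions satisfy ∑_i H(a^{(j)}_i) ≥ f_A and ∑_i H(b^{(j)}_i) ≥ f_B for every j, and also ∑_i H(A_i) ≥ f_A for the mixed marginals, then ∑_{i=1}^L H(A_i, B_i) ≥ f_A + f_B. -/
/-!
For each observable pair the joint distribution is `P(x, y) = ∑ⱼ wⱼ(x) bⱼ(y)` with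
`wⱼ(x) = λⱼ aⱼ(x)`. Concavity of `t ↦ -t log t`, applied row by row with the weights
`wⱼ(x) / ∑ⱼ wⱼ(x)`, bounds the conditional entropy: `H(A, B) - H(A) ≥ ∑ⱼ λⱼ H(bⱼ)`.
Summing over the observables, the first term is at least `f_A` by hypothesis and the
second at least `∑ⱼ λⱼ f_B = f_B`.
-/

open Finset

/-- Shannon entropy (in bits) of a finitely supported distribution. -/
noncomputable def shannon {α : Type*} [Fintype α] (p : α → ℝ) : ℝ :=
  -∑ a, p a * Real.logb 2 (p a)

/-- Marginal distribution on the first factor. -/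
noncomputable def margX {X Y : Type*} [Fintype X] [Fintype Y] (p : X × Y → ℝ) (x : X) : ℝ :=
  ∑ y, p (x, y)

open Real

lemma Real.sum_mul_negMulLog_le {ι : Type*} (s : Finset ι) {w c : ι → ℝ}
    (hw : ∀ i ∈ s, 0 ≤ w i) (hc : ∀ i ∈ s, 0 ≤ c i) :
    ∑ i ∈ s, w i * negMulLog (c i) ≤
      negMulLog (∑ i ∈ s, w i * c i) + (∑ i ∈ s, w i * c i) * log (∑ i ∈ s, w i) := by
  rcases (sum_nonneg hw).eq_or_lt with hm | hm
  · have hw0 : ∀ i ∈ s, w i = 0 := (sum_eq_zero_iff_of_nonneg hw).1 hm.symm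
    simp +contextual [sum_eq_zero, hw0]
  · have jensen := concaveOn_negMulLog.le_map_centerMass hw hm hc
    simp only [centerMass, smul_eq_mul, Function.comp_def, negMulLog_mul] at jensen
    have := mul_le_mul_of_nonneg_left jensen hm.le
    rw [← mul_assoc, mul_inv_cancel₀ hm.ne', one_mul] at this
    -- `m · η(s / m) = η(s) + s log m` for `η = negMulLog`, `m = ∑ w`, `s = ∑ w c`
    refine this.trans_eq ?_
    rw [negMulLog, log_inv]
    field_simp
    ring

lemma shannon_eq_sum_negMulLog {α : Type*} [Fintype α] (p : α → ℝ) :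
    shannon p = (∑ a, negMulLog (p a)) / log 2 := by
  simp only [shannon, logb, negMulLog, sum_div, ← sum_neg_distrib]
  congr 1 with a
  ring

lemma sum_mul_sum_negMulLog_add_negMulLog_sum_le {J Y : Type*} [Fintype J] [Fintype Y]
    {w : J → ℝ} {c : J → Y → ℝ} (hw : ∀ j, 0 ≤ w j) (hc : ∀ j y, 0 ≤ c j y)
    (hc1 : ∀ j, ∑ y, c j y = 1) :
    ∑ j, w j * ∑ y, negMulLog (c j y) + negMulLog (∑ j, w j) ≤
      ∑ y, negMulLog (∑ j, w j * c j y) := by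
  have hmass : ∑ y, ∑ j, w j * c j y = ∑ j, w j := by
    rw [sum_comm]; simp [← mul_sum, hc1]
  calc ∑ j, w j * ∑ y, negMulLog (c j y) + negMulLog (∑ j, w j)
      = ∑ y, ∑ j, w j * negMulLog (c j y) + negMulLog (∑ j, w j) := by
        simp only [mul_sum]; rw [sum_comm]
    _ ≤ ∑ y, (negMulLog (∑ j, w j * c j y) + (∑ j, w j * c j y) * log (∑ j, w j))
          + negMulLog (∑ j, w j) := by
        gcongr with y
        exact sum_mul_negMulLog_le _ (fun j _ => hw j) (fun j _ => hc j y)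
    _ = ∑ y, negMulLog (∑ j, w j * c j y) := by
        rw [sum_add_distrib, ← sum_mul, hmass, negMulLog]; ring

lemma shannon_margX_add_sum_mul_shannon_le {X Y J : Type*} [Fintype X] [Fintype Y] [Fintype J]
    {P : X × Y → ℝ} {w : J → X → ℝ} {c : J → Y → ℝ} (hP : ∀ z, P z = ∑ j, w j z.1 * c j z.2)
    (hw : ∀ j x, 0 ≤ w j x) (hc : ∀ j y, 0 ≤ c j y) (hc1 : ∀ j, ∑ y, c j y = 1) :
    shannon (margX P) + ∑ j, (∑ x, w j x) * shannon (c j) ≤ shannon P := by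
  have hmarg : ∀ x, margX P x = ∑ j, w j x := fun x => by
    simp only [margX, hP]; rw [sum_comm]; simp only [← mul_sum, hc1, mul_one]
  simp only [shannon_eq_sum_negMulLog, hmarg, ← mul_div_assoc, ← sum_div, ← add_div]
  gcongr
  calc ∑ x, negMulLog (∑ j, w j x) + ∑ j, (∑ x, w j x) * ∑ y, negMulLog (c j y)
      = ∑ x, (∑ j, w j x * ∑ y, negMulLog (c j y) + negMulLog (∑ j, w j x)) := by
        simp only [sum_add_distrib, sum_mul]; rw [sum_comm, add_comm]
    _ ≤ ∑ x, ∑ y, negMulLog (∑ j, w j x * c j y) :=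
        sum_le_sum fun x _ =>
          sum_mul_sum_negMulLog_add_negMulLog_sum_le (fun j => hw j x) hc hc1
    _ = ∑ z, negMulLog (P z) := by simp only [Fintype.sum_prod_type, hP]

theorem stmt_6_general {X Y J : Type*} [Fintype X] [Fintype Y] [Fintype J] (L : ℕ)
    (lam : J → ℝ) (hlam0 : ∀ j, 0 ≤ lam j) (hlam1 : ∑ j, lam j = 1)
    (a : J → Fin L → X → ℝ) (b : J → Fin L → Y → ℝ)
    (ha0 : ∀ j i x, 0 ≤ a j i x) (ha1 : ∀ j i, ∑ x, a j i x = 1)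
    (hb0 : ∀ j i y, 0 ≤ b j i y) (hb1 : ∀ j i, ∑ y, b j i y = 1)
    (P : Fin L → X × Y → ℝ)
    (hP : ∀ i z, P i z = ∑ j, lam j * (a j i z.1 * b j i z.2))
    (fA fB : ℝ)
    (hfb : ∀ j, fB ≤ ∑ i, shannon (b j i))
    (hA : fA ≤ ∑ i, shannon (fun x => margX (P i) x)) :
    fA + fB ≤ ∑ i, shannon (P i) := by
  have hchain : ∀ i, shannon (margX (P i)) + ∑ j, lam j * shannon (b j i) ≤ shannon (P i) :=
    fun i => by
      simpa only [← mul_sum, ha1, mul_one] using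
        shannon_margX_add_sum_mul_shannon_le (w := fun j x => lam j * a j i x)
          (fun z => by simp only [hP, mul_assoc]) (fun j x => mul_nonneg (hlam0 j) (ha0 j i x))
          (fun j => hb0 j i) (fun j => hb1 j i)
  have hB : fB ≤ ∑ i, ∑ j, lam j * shannon (b j i) := by
    rw [sum_comm]
    calc fB = ∑ j, lam j * fB := by rw [← sum_mul, hlam1, one_mul]
      _ ≤ ∑ j, lam j * ∑ i, shannon (b j i) := by gcongr with j; exacts [hlam0 j, hfb j]
      _ = ∑ j, ∑ i, lam j * shannon (b j i) := by simp only [mul_sum]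
  have hsum := sum_le_sum fun i (_ : i ∈ univ) => hchain i
  rw [sum_add_distrib] at hsum
  linarith

theorem stmt_6 {X Y J : Type*} [Fintype X] [Fintype Y] [Fintype J] (L : ℕ)
    (lam : J → ℝ) (hlam0 : ∀ j, 0 ≤ lam j) (hlam1 : ∑ j, lam j = 1)
    (a : J → Fin L → X → ℝ) (b : J → Fin L → Y → ℝ)
    (ha0 : ∀ j i x, 0 ≤ a j i x) (ha1 : ∀ j i, ∑ x, a j i x = 1)
    (hb0 : ∀ j i y, 0 ≤ b j i y) (hb1 : ∀ j i, ∑ y, b j i y = 1)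
    (P : Fin L → X × Y → ℝ)
    (hP : ∀ i z, P i z = ∑ j, lam j * (a j i z.1 * b j i z.2))
    (fA fB : ℝ)
    (hfa : ∀ j, fA ≤ ∑ i, shannon (a j i))
    (hfb : ∀ j, fB ≤ ∑ i, shannon (b j i))
    (hA : fA ≤ ∑ i, shannon (fun x => margX (P i) x)) :
    fA + fB ≤ ∑ i, shannon (P i) :=
  stmt_6_general L lam hlam0 hlam1 a b ha0 ha1 hb0 hb1 P hP fA fB hfb hA
end

section
/- For a single qubit pure state, let p_x, p_y, p_z be the outcome distributions of the Pauli measurements σ_x, σ_y, σ_z. Then H(p_x) + H(p_y) + H(p_z) ≥ 2, with equality attained by eigenstates of one of the Pauli operators. -/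
open Finset

/-- Outcome distribution of a ±1 Pauli measurement on a qubit with Bloch component r. -/
noncomputable def pauliDist (r : ℝ) : Bool → ℝ :=
  fun s => if s then (1 + r) / 2 else (1 - r) / 2

/-!
With `h = binEntropy` the binary entropy in nats, `H(p_w) = h((1 + r_w) / 2) / log 2`, and `h`
dominates the quadratic `4 p (1 - p) log 2`, i.e. `H(p_w) ≥ 1 - r_w ^ 2`. Summing over the three
Pauli directions and using `r_x ^ 2 + r_y ^ 2 + r_z ^ 2 = 1` gives the bound 2.

For the quadratic bound, the gap `g(r) = h((1 + r) / 2) - (1 - r ^ 2) log 2` is even, and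
`g(0) = g'(0) = g(1) = 0`. Its second derivative `2 log 2 - 1 / (1 - r ^ 2)` changes sign once
on `[0, 1)`, at `r₀ = √(1 - 1 / (2 log 2))`: on `[0, r₀]` the gap is convex with a horizontal
tangent at `0`, hence nonnegative, and on `[r₀, 1]` it is concave, hence above
`min (g r₀) (g 1) = 0`.
-/

open Real Set

lemma monotoneOn_Icc_of_hasDerivAt_nonneg {f f' : ℝ → ℝ} {a b : ℝ}
    (hf : ∀ x ∈ Icc a b, HasDerivAt f (f' x) x) (hf' : ∀ x ∈ Ioo a b, 0 ≤ f' x) :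
    MonotoneOn f (Icc a b) :=
  monotoneOn_of_hasDerivWithinAt_nonneg (convex_Icc a b)
    (fun x hx => (hf x hx).continuousAt.continuousWithinAt)
    (fun x hx => (hf x (interior_subset hx)).hasDerivWithinAt)
    (by rwa [interior_Icc])

noncomputable def entropyGap (r : ℝ) : ℝ :=
  binEntropy ((1 + r) / 2) - (1 - r ^ 2) * log 2

noncomputable def entropyGapDeriv (r : ℝ) : ℝ :=
  (log (1 - r) - log (1 + r)) / 2 + 2 * r * log 2

noncomputable def entropyGapInflection : ℝ := √(1 - 1 / (2 * log 2))

local notation "r₀" => entropyGapInflection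

section EntropyGap

variable {r : ℝ}

lemma hasDerivAt_entropyGap (h₁ : -1 < r) (h₂ : r < 1) :
    HasDerivAt entropyGap (entropyGapDeriv r) r := by
  have hp : HasDerivAt (fun r : ℝ => (1 + r) / 2) (1 / 2) r := by
    simpa using ((hasDerivAt_id r).const_add 1).div_const 2
  have hH := (hasDerivAt_binEntropy (p := (1 + r) / 2) (by linarith) (by linarith)).comp r hp
  have hq : HasDerivAt (fun r : ℝ => (1 - r ^ 2) * log 2) (-(2 * r) * log 2) r := by
    simpa using ((hasDerivAt_pow 2 r).const_sub 1).mul_const (log 2)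
  refine (hH.sub hq).congr_deriv ?_
  have hm : 1 - (1 + r) / 2 = (1 - r) / 2 := by ring
  rw [hm, log_div (by linarith) two_ne_zero, log_div (by linarith) two_ne_zero, entropyGapDeriv]
  ring

lemma hasDerivAt_entropyGapDeriv (h₁ : -1 < r) (h₂ : r < 1) :
    HasDerivAt entropyGapDeriv (2 * log 2 - 1 / (1 - r ^ 2)) r := by
  have hm := ((hasDerivAt_id r).const_sub 1).log (by simp; linarith)
  have hp := ((hasDerivAt_id r).const_add 1).log (by simp; linarith)
  have hl : HasDerivAt (fun r : ℝ => 2 * r * log 2) (2 * log 2) r := by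
    simpa using ((hasDerivAt_id r).const_mul 2).mul_const (log 2)
  refine (((hm.sub hp).div_const 2).add hl).congr_deriv ?_
  have hm' : 1 - r ≠ 0 := by linarith
  have hp' : 1 + r ≠ 0 := by linarith
  have : 1 - r ^ 2 = (1 - r) * (1 + r) := by ring
  simp only [id, this]
  field_simp
  ring

lemma one_div_two_mul_log_two_lt_one : 1 / (2 * log 2) < 1 := by
  have := log_two_gt_d9
  rw [div_lt_one (by linarith)]
  linarith

lemma entropyGapInflection_sq : r₀ ^ 2 = 1 - 1 / (2 * log 2) :=
  sq_sqrt (by linarith [one_div_two_mul_log_two_lt_one])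

lemma entropyGapInflection_nonneg : 0 ≤ r₀ := sqrt_nonneg _

lemma entropyGapInflection_lt_one : r₀ < 1 := by
  have : 0 < 1 / (2 * log 2) := by positivity
  nlinarith [entropyGapInflection_sq, entropyGapInflection_nonneg]

lemma entropyGap_deriv2_nonneg (h₀ : 0 ≤ r) (h : r ≤ r₀) :
    0 ≤ 2 * log 2 - 1 / (1 - r ^ 2) := by
  have hlog : 0 < 2 * log 2 := mul_pos two_pos (log_pos one_lt_two)
  have hr : 1 / (2 * log 2) ≤ 1 - r ^ 2 := by nlinarith [entropyGapInflection_sq]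
  have : 1 / (1 - r ^ 2) ≤ 2 * log 2 :=
    (one_div_le ((one_div_pos.2 hlog).trans_le hr) hlog).2 hr
  linarith

lemma entropyGap_deriv2_nonpos (h : r₀ ≤ r) (h₁ : r < 1) :
    2 * log 2 - 1 / (1 - r ^ 2) ≤ 0 := by
  have hr : 1 - r ^ 2 ≤ 1 / (2 * log 2) := by
    nlinarith [entropyGapInflection_sq, entropyGapInflection_nonneg]
  have hpos : 0 < 1 - r ^ 2 := by nlinarith [entropyGapInflection_nonneg]
  have : 2 * log 2 ≤ 1 / (1 - r ^ 2) :=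
    (le_one_div (mul_pos two_pos (log_pos one_lt_two)) hpos).2 hr
  linarith

lemma entropyGap_zero : entropyGap 0 = 0 := by
  simp [entropyGap]

lemma entropyGap_one : entropyGap 1 = 0 := by
  norm_num [entropyGap]

lemma entropyGapDeriv_zero : entropyGapDeriv 0 = 0 := by
  simp [entropyGapDeriv]

lemma entropyGap_neg : entropyGap (-r) = entropyGap r := by
  rw [entropyGap, entropyGap, ← binEntropy_one_sub ((1 + r) / 2)]
  ring_nf

lemma entropyGap_nonneg_of_le_inflection (h₀ : 0 ≤ r) (h : r ≤ r₀) :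
    0 ≤ entropyGap r := by
  have hI : ∀ x ∈ Icc 0 r₀, -1 < x ∧ x < 1 := fun x hx =>
    ⟨by linarith [hx.1], hx.2.trans_lt entropyGapInflection_lt_one⟩
  have hDeriv : MonotoneOn entropyGapDeriv (Icc 0 r₀) :=
    monotoneOn_Icc_of_hasDerivAt_nonneg
      (fun x hx => hasDerivAt_entropyGapDeriv (hI x hx).1 (hI x hx).2)
      (fun x hx => entropyGap_deriv2_nonneg hx.1.le hx.2.le)
  have hGap : MonotoneOn entropyGap (Icc 0 r₀) :=
    monotoneOn_Icc_of_hasDerivAt_nonneg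
      (fun x hx => hasDerivAt_entropyGap (hI x hx).1 (hI x hx).2)
      (fun x hx => entropyGapDeriv_zero ▸ hDeriv ⟨le_rfl, entropyGapInflection_nonneg⟩
        (Ioo_subset_Icc_self hx) hx.1.le)
  exact entropyGap_zero ▸ hGap ⟨le_rfl, entropyGapInflection_nonneg⟩ ⟨h₀, h⟩ h₀

lemma concaveOn_entropyGap : ConcaveOn ℝ (Icc r₀ 1) entropyGap := by
  have hI : ∀ x ∈ interior (Icc r₀ 1), -1 < x ∧ x < 1 := fun x hx => by
    rw [interior_Icc] at hx
    exact ⟨by linarith [hx.1, entropyGapInflection_nonneg], hx.2⟩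
  refine concaveOn_of_hasDerivWithinAt2_nonpos (convex_Icc r₀ 1)
    (by unfold entropyGap; fun_prop)
    (fun x hx => (hasDerivAt_entropyGap (hI x hx).1 (hI x hx).2).hasDerivWithinAt)
    (fun x hx => (hasDerivAt_entropyGapDeriv (hI x hx).1 (hI x hx).2).hasDerivWithinAt)
    (fun x hx => ?_)
  rw [interior_Icc] at hx
  exact entropyGap_deriv2_nonpos hx.1.le hx.2

lemma entropyGap_nonneg (h : |r| ≤ 1) : 0 ≤ entropyGap r := by
  wlog h₀ : 0 ≤ r generalizing r
  · rw [← entropyGap_neg]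
    exact this (by rwa [abs_neg]) (by linarith)
  rw [abs_of_nonneg h₀] at h
  rcases le_total r r₀ with hr | hr
  · exact entropyGap_nonneg_of_le_inflection h₀ hr
  · have hr₀ := entropyGapInflection_lt_one.le
    have hmin := concaveOn_entropyGap.ge_on_segment (left_mem_Icc.2 hr₀) (right_mem_Icc.2 hr₀)
      ((segment_eq_Icc hr₀).symm ▸ ⟨hr, h⟩ : r ∈ segment ℝ r₀ 1)
    rw [entropyGap_one] at hmin
    exact (le_min (entropyGap_nonneg_of_le_inflection entropyGapInflection_nonneg le_rfl)
      le_rfl).trans hmin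

end EntropyGap

section PauliEntropy

variable {r : ℝ}

lemma shannon_pauliDist : shannon (pauliDist r) = binEntropy ((1 + r) / 2) / log 2 := by
  have hm : 1 - (1 + r) / 2 = (1 - r) / 2 := by ring
  simp only [shannon, pauliDist, Fintype.sum_bool, if_true, Bool.false_eq_true, if_false,
    binEntropy, hm, log_inv, logb]
  ring

lemma one_sub_sq_le_shannon_pauliDist (h : r ^ 2 ≤ 1) : 1 - r ^ 2 ≤ shannon (pauliDist r) := by
  rw [shannon_pauliDist, le_div_iff₀ (log_pos one_lt_two)]
  exact sub_nonneg.1 (entropyGap_nonneg ((sq_le_one_iff_abs_le_one r).1 h))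

lemma shannon_pauliDist_zero : shannon (pauliDist 0) = 1 := by
  rw [shannon_pauliDist, add_zero, one_div, binEntropy_two_inv,
    div_self (log_pos one_lt_two).ne']

lemma shannon_pauliDist_of_abs_eq_one (h : |r| = 1) : shannon (pauliDist r) = 0 := by
  rcases abs_eq zero_le_one |>.1 h with rfl | rfl <;> norm_num [shannon_pauliDist]

lemma shannon_pauliDist_add_add_of_abs_eq_one {a b c : ℝ} (h : a ^ 2 + b ^ 2 + c ^ 2 = 1)
    (ha : |a| = 1) :
    shannon (pauliDist a) + shannon (pauliDist b) + shannon (pauliDist c) = 2 := by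
  have ha2 : a ^ 2 = 1 := by rw [← sq_abs, ha, one_pow]
  obtain rfl : b = 0 := by nlinarith [sq_nonneg c]
  obtain rfl : c = 0 := by nlinarith
  rw [shannon_pauliDist_of_abs_eq_one ha, shannon_pauliDist_zero]
  norm_num

end PauliEntropy

theorem stmt_7 (rx ry rz : ℝ) (hunit : rx ^ 2 + ry ^ 2 + rz ^ 2 = 1) :
    2 ≤ shannon (pauliDist rx) + shannon (pauliDist ry) + shannon (pauliDist rz) ∧
    ((|rx| = 1 ∨ |ry| = 1 ∨ |rz| = 1) →
      shannon (pauliDist rx) + shannon (pauliDist ry) + shannon (pauliDist rz) = 2) := by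
  refine ⟨?_, ?_⟩
  · have hx : rx ^ 2 ≤ 1 := by nlinarith [sq_nonneg ry, sq_nonneg rz]
    have hy : ry ^ 2 ≤ 1 := by nlinarith [sq_nonneg rx, sq_nonneg rz]
    have hz : rz ^ 2 ≤ 1 := by nlinarith [sq_nonneg rx, sq_nonneg ry]
    linarith [one_sub_sq_le_shannon_pauliDist hx, one_sub_sq_le_shannon_pauliDist hy,
      one_sub_sq_le_shannon_pauliDist hz]
  · rintro (h | h | h)
    · exact shannon_pauliDist_add_add_of_abs_eq_one hunit h
    · linarith [shannon_pauliDist_add_add_of_abs_eq_one (b := rx) (c := rz) (by linarith) h]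
    · linarith [shannon_pauliDist_add_add_of_abs_eq_one (b := rx) (c := ry) (by linarith) h]
end

section
/- For 0 < ε < 1, with ε̄ = 2ε√(1-ε²), the quantity -½(1-ε̄)log₂(¼(1-ε̄)) - ½(1+ε̄)log₂(¼(1+ε̄)) is strictly less than 2. -/
/-!
The quantity is the Shannon entropy, in bits, of the distribution
`((1-ε̄)/4, (1-ε̄)/4, (1+ε̄)/4, (1+ε̄)/4)`, i.e. `1 + h₂((1-ε̄)/2)` with `h₂` the binary entropy in
bits. Since `h₂(p) < 1` unless `p = 1/2`, the bound is strict as soon as `ε̄ ≠ 0`, which holds for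
`0 < ε < 1`.
-/

open Real

lemma mul_logb_two_div_two (x : ℝ) : x * logb 2 (x / 2) = x * logb 2 x - x := by
  rcases eq_or_ne x 0 with rfl | hx
  · simp
  · rw [logb_div hx two_ne_zero, logb_self_eq_one one_lt_two]
    ring

lemma binEntropy_div_log_two (p : ℝ) :
    binEntropy p / log 2 = -(p * logb 2 p) - (1 - p) * logb 2 (1 - p) := by
  simp only [binEntropy, log_inv, logb]
  ring

lemma entropy_bits_eq_one_add_binEntropy (t : ℝ) :
    -(1 / 2) * (1 - t) * logb 2 ((1 / 4) * (1 - t))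
      - (1 / 2) * (1 + t) * logb 2 ((1 / 4) * (1 + t))
      = 1 + binEntropy ((1 - t) / 2) / log 2 := by
  have hp := mul_logb_two_div_two ((1 - t) / 2)
  have hq := mul_logb_two_div_two ((1 + t) / 2)
  rw [show (1 - t) / 2 / 2 = (1 / 4) * (1 - t) by ring] at hp
  rw [show (1 + t) / 2 / 2 = (1 / 4) * (1 + t) by ring] at hq
  rw [binEntropy_div_log_two, show 1 - (1 - t) / 2 = (1 + t) / 2 by ring]
  linear_combination -hp - hq

lemma entropy_bits_lt_two {t : ℝ} (ht : t ≠ 0) :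
    -(1 / 2) * (1 - t) * logb 2 ((1 / 4) * (1 - t))
      - (1 / 2) * (1 + t) * logb 2 ((1 / 4) * (1 + t)) < 2 := by
  have hp : (1 - t) / 2 ≠ 2⁻¹ := fun h => ht (by linarith)
  have hbits : binEntropy ((1 - t) / 2) / log 2 < 1 :=
    (div_lt_one (log_pos one_lt_two)).mpr (binEntropy_lt_log_two.mpr hp)
  rw [entropy_bits_eq_one_add_binEntropy]
  linarith

theorem stmt_12 (ε : ℝ) (hε0 : 0 < ε) (hε1 : ε < 1) :
    -(1 / 2) * (1 - 2 * ε * Real.sqrt (1 - ε ^ 2)) *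
        Real.logb 2 ((1 / 4) * (1 - 2 * ε * Real.sqrt (1 - ε ^ 2)))
      - (1 / 2) * (1 + 2 * ε * Real.sqrt (1 - ε ^ 2)) *
        Real.logb 2 ((1 / 4) * (1 + 2 * ε * Real.sqrt (1 - ε ^ 2))) < 2 := by
  have hsqrt : 0 < Real.sqrt (1 - ε ^ 2) := Real.sqrt_pos.mpr (by nlinarith)
  exact entropy_bits_lt_two (by positivity)
end

section
/- Let |ψ_λ⟩ = ∑_{i=0}^{d-1} λ_i |ii⟩ with all λ_i > 0 and ∑ λ_i² = 1. Let A₂, B₂ be the Fourier-transformed bases, with joint outcome probabilities p(j,k) = |⟨f_j ⊗ f_k | ψ_λ⟩|² where |f_j⟩ = (1/√d)∑_m ω^{jm}|m⟩, ω = e^{2πi/d}. Then p(j,k) = |∑_m λ_m ω^{-(j+k)m}|²/d², and p is the uniform distribution on d² outcomes only if exactly one λ_i is nonzero; hence for the given states H(A₂,B₂) < 2 log₂ d. -/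
/-!
Write `ζ = ω⁻¹`. The amplitude of the outcome `(j, k)` is the discrete Fourier transform of `λ`
at the frequency `j + k`, so Parseval's identity along each row `j` shows that `p` is a
probability distribution. On the other hand `p (0, 0) = (∑ λ)² / d² > (∑ λ²) / d² = 1 / d²`,
because at least two of the `λ_i` are positive. Hence `p` is never uniform, and strict concavity
of `x ↦ -x log x` puts its entropy strictly below `log₂ d² = 2 log₂ d`.
-/

open Finset

namespace IsPrimitiveRoot

variable {ζ : ℂ} {d : ℕ}

lemma sum_zpow_mul_sub_eq_ite (hζ : IsPrimitiveRoot ζ d) (m n : Fin d) :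
    ∑ t : Fin d, ζ ^ ((t : ℤ) * ((m : ℤ) - n)) = if m = n then (d : ℂ) else 0 := by
  split_ifs with hmn
  · simp [hmn]
  set z := ζ ^ ((m : ℤ) - n)
  have hz : z ≠ 1 := by
    rw [Ne, hζ.zpow_eq_one_iff_dvd]
    intro hdvd
    have hlt : |(m : ℤ) - n| < d := abs_sub_lt_iff.mpr ⟨by omega, by omega⟩
    exact hmn (Fin.ext (by have := Int.eq_zero_of_abs_lt_dvd hdvd hlt; omega))
  have hzd : z ^ d = 1 := by
    rw [← zpow_natCast, ← zpow_mul, mul_comm, zpow_mul, zpow_natCast, hζ.pow_eq_one, one_zpow]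
  calc ∑ t : Fin d, ζ ^ ((t : ℤ) * ((m : ℤ) - n)) = ∑ t ∈ range d, z ^ t := by
        rw [← Fin.sum_univ_eq_sum_range (fun t => z ^ t)]
        refine sum_congr rfl fun t _ => ?_
        rw [mul_comm, zpow_mul, zpow_natCast]
    _ = 0 := by rw [geom_sum_eq hz, hzd, sub_self, zero_div]

variable [NeZero d]

lemma conj_zpow (hζ : IsPrimitiveRoot ζ d) (k : ℤ) : starRingEnd ℂ (ζ ^ k) = ζ ^ (-k) := by
  rw [map_zpow₀, ← Complex.inv_eq_conj (hζ.norm'_eq_one (NeZero.ne d)), inv_zpow']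

/-- Parseval's identity for the discrete Fourier transform of length `d`. -/
lemma sum_norm_sq_sum_mul_zpow (hζ : IsPrimitiveRoot ζ d) (c : Fin d → ℂ) :
    ∑ t : Fin d, ‖∑ m, c m * ζ ^ ((t : ℤ) * m)‖ ^ 2 = d * ∑ m, ‖c m‖ ^ 2 := by
  have hζ0 : ζ ≠ 0 := hζ.ne_zero (NeZero.ne d)
  apply Complex.ofReal_injective
  push_cast
  simp_rw [← Complex.mul_conj']
  calc ∑ t : Fin d, (∑ m, c m * ζ ^ ((t : ℤ) * m)) * starRingEnd ℂ (∑ n, c n * ζ ^ ((t : ℤ) * n))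
      = ∑ m, ∑ n, c m * starRingEnd ℂ (c n) * ∑ t : Fin d, ζ ^ ((t : ℤ) * ((m : ℤ) - n)) := by
        simp_rw [map_sum, map_mul, hζ.conj_zpow, sum_mul_sum, mul_sum]
        rw [sum_comm]
        refine sum_congr rfl fun m _ => ?_
        rw [sum_comm]
        refine sum_congr rfl fun n _ => sum_congr rfl fun t _ => ?_
        rw [mul_sub, sub_eq_add_neg, zpow_add₀ hζ0]
        ring
    _ = d * ∑ m, c m * starRingEnd ℂ (c m) := by
        simp only [hζ.sum_zpow_mul_sub_eq_ite, mul_ite, mul_zero, sum_ite_eq, mem_univ, if_true,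
          mul_sum]
        exact sum_congr rfl fun m _ => mul_comm _ _

/-- Shifting the frequency by `j` amounts to modulating `c` by the unimodular `ζ ^ (j * m)`. -/
lemma sum_norm_sq_sum_mul_zpow_add (hζ : IsPrimitiveRoot ζ d) (c : Fin d → ℂ) (j : ℤ) :
    ∑ t : Fin d, ‖∑ m, c m * ζ ^ ((j + t) * m)‖ ^ 2 = d * ∑ m, ‖c m‖ ^ 2 := by
  have hζ0 : ζ ≠ 0 := hζ.ne_zero (NeZero.ne d)
  have hmod : ∀ t : Fin d, ∑ m, c m * ζ ^ ((j + t) * m)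
      = ∑ m, (c m * ζ ^ (j * m)) * ζ ^ ((t : ℤ) * m) := fun t =>
    sum_congr rfl fun m _ => by rw [add_mul, zpow_add₀ hζ0, mul_assoc]
  simp_rw [hmod, hζ.sum_norm_sq_sum_mul_zpow, norm_mul, norm_zpow, hζ.norm'_eq_one (NeZero.ne d),
    one_zpow, mul_one]

end IsPrimitiveRoot

lemma sum_sq_lt_sq_sum {ι : Type*} [Fintype ι] {x : ι → ℝ} (hx : ∀ i, 0 < x i)
    (hι : 1 < Fintype.card ι) : ∑ i, x i ^ 2 < (∑ i, x i) ^ 2 := by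
  have hlt : ∀ i, x i < ∑ j, x j := fun i => by
    obtain ⟨j, hji⟩ := Fintype.exists_ne_of_one_lt_card hι i
    exact single_lt_sum hji (mem_univ i) (mem_univ j) (hx j) fun k _ _ => (hx k).le
  have : Nonempty ι := Fintype.card_pos_iff.mp (by omega)
  calc ∑ i, x i ^ 2 < ∑ i, x i * ∑ j, x j :=
        sum_lt_sum_of_nonempty univ_nonempty fun i _ => by
          rw [sq]; exact mul_lt_mul_of_pos_left (hlt i) (hx i)
    _ = (∑ i, x i) ^ 2 := by rw [← sum_mul, sq]

lemma shannon_eq_sum_negMulLog_div {α : Type*} [Fintype α] (p : α → ℝ) :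
    shannon p = (∑ a, Real.negMulLog (p a)) / Real.log 2 := by
  simp only [shannon, Real.negMulLog, Real.logb, sum_div, ← sum_neg_distrib]
  exact sum_congr rfl fun a _ => by ring

lemma shannon_lt_logb_card {α : Type*} [Fintype α] {p : α → ℝ} (hp₀ : ∀ a, 0 ≤ p a)
    (hp₁ : ∑ a, p a = 1) (hne : ∃ a, p a ≠ (Fintype.card α : ℝ)⁻¹) :
    shannon p < Real.logb 2 (Fintype.card α) := by
  set n := (Fintype.card α : ℝ)
  obtain ⟨a, ha⟩ := hne
  have hn : 0 < n := by have : Nonempty α := ⟨a⟩; positivity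
  have hnonconst : ∃ b ∈ univ, ∃ c ∈ univ, p b ≠ p c := by
    by_contra! hconst
    refine ha (eq_inv_of_mul_eq_one_right ?_)
    rw [← hp₁, ← nsmul_eq_mul, ← card_univ, ← sum_const]
    exact sum_congr rfl fun b _ => hconst a (mem_univ a) b (mem_univ b)
  have hjensen := Real.strictConcaveOn_negMulLog.lt_map_sum (t := univ) (w := fun _ => n⁻¹)
    (fun _ _ => inv_pos.mpr hn) (by simp [sum_const, n, hn.ne']) (fun b _ => hp₀ b) hnonconst
  simp only [smul_eq_mul, ← mul_sum, hp₁, mul_one] at hjensen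
  rw [shannon_eq_sum_negMulLog_div, Real.logb]
  refine div_lt_div_of_pos_right ?_ (Real.log_pos one_lt_two)
  rw [Real.negMulLog, Real.log_inv, neg_mul_neg] at hjensen
  exact lt_of_mul_lt_mul_left hjensen (inv_nonneg.mpr hn.le)

theorem stmt_14 (d : ℕ) (hd : 2 ≤ d)
    (lam : Fin d → ℝ) (hpos : ∀ i, 0 < lam i) (hsum : ∑ i, lam i ^ 2 = 1)
    (ω : ℂ) (hω : ω = Complex.exp (2 * Real.pi * Complex.I / d))
    (p : Fin d × Fin d → ℝ)
    (hp : ∀ j k : Fin d, p (j, k) =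
      ‖∑ m : Fin d, (lam m : ℂ) * ω ^ (-(((j : ℤ) + (k : ℤ)) * (m : ℤ)))‖ ^ 2
        / (d : ℝ) ^ 2) :
    ((∀ z : Fin d × Fin d, p z = 1 / (d ^ 2 : ℝ)) → ∃! i, lam i ≠ 0) ∧
    shannon p < 2 * Real.logb 2 d := by
  have : NeZero d := ⟨by omega⟩
  have hζ : IsPrimitiveRoot ω⁻¹ d := (hω ▸ Complex.isPrimitiveRoot_exp d (NeZero.ne d)).inv
  simp_rw [← inv_zpow'] at hp
  have hp_nonneg : ∀ z, 0 ≤ p z := fun ⟨j, k⟩ => by rw [hp]; positivity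
  have hp_sum : ∑ z, p z = 1 := by
    simp_rw [Fintype.sum_prod_type, hp, ← sum_div,
      hζ.sum_norm_sq_sum_mul_zpow_add (fun m => (lam m : ℂ)), Complex.norm_real, Real.norm_eq_abs,
      sq_abs, hsum, mul_one, sum_const, card_univ, Fintype.card_fin, nsmul_eq_mul]
    field_simp
  have hp_origin : 1 / (d : ℝ) ^ 2 < p (0, 0) := by
    have hsq := sum_sq_lt_sq_sum hpos (by rw [Fintype.card_fin]; omega)
    rw [hsum] at hsq
    rw [hp]
    simp only [Fin.val_zero, Nat.cast_zero, add_zero, zero_mul, zpow_zero, mul_one]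
    rw [← Complex.ofReal_sum, Complex.norm_real, Real.norm_eq_abs, sq_abs]
    gcongr
  refine ⟨fun huni => absurd (huni (0, 0)) hp_origin.ne', ?_⟩
  have hent := shannon_lt_logb_card hp_nonneg hp_sum ⟨(0, 0), by simpa [sq] using hp_origin.ne'⟩
  simpa [← sq, Real.logb_pow] using hent
end
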